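/- Let λ : n_b → ℝ and, for n ∈ n_b, define the n-th component of the angle gradient of the weighted power injection, W_n(θ) := j·λ_n·V_n·conj(I_n) − j·conj(V_n)·Σ_i λ_i·V_i·conj(Y_{i n}) (this equals Σ_i λ_i·∂S_i/∂θ_n). Then for all m, n ∈ n_b, the partial derivative of W_n with respect to the angle θ_m exists and equals −[m = n]·λ_m·V_m·conj(I_m) + λ_n·V_n·conj(Y_{n m})·conj(V_m) + λ_m·V_m·conj(Y_{m n})·conj(V_n) − [m = n]·conj(V_n)·Σ_i λ_i·V_i·conj(Y_{i n}); this is the (m, n) entry of the angle–angle Hessian G_ΘΘ(λ) = diag(conj(V))·(conj(Y)ᵀ·diag(V)·diag(λ) − diag(conj(Y)ᵀ·diag(V)·λ)) + diag(λ)·diag(V)·(conj(Y)·diag(conj(V)) − diag(conj(I))). -/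

import Mathlib

open Matrix

/-- Complex bus voltage `V_k = v_k · exp(j θ_k)`. -/
noncomputable def busV {nb : Type*} (v θ : nb → ℝ) (k : nb) : ℂ :=
  (v k : ℂ) * Complex.exp (Complex.I * (θ k : ℂ))

/-- Bus current injection `I_i = Σ_k Y_{i k} V_k`. -/
noncomputable def busI {nb : Type*} [Fintype nb] (Y : Matrix nb nb ℂ)
    (v θ : nb → ℝ) (i : nb) : ℂ :=
  ∑ k, Y i k * busV v θ k

/-- `n`-th component of the angle gradient of the `λ`-weighted power injection:
`W_n(θ) = j λ_n V_n conj(I_n) - j conj(V_n) Σ_i λ_i V_i conj(Y_{i n})`. -/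
noncomputable def gradThetaW {nb : Type*} [Fintype nb] (Y : Matrix nb nb ℂ)
    (lam : nb → ℝ) (v θ : nb → ℝ) (n : nb) : ℂ :=
  Complex.I * (lam n : ℂ) * busV v θ n * (starRingEnd ℂ) (busI Y v θ n)
    - Complex.I * (starRingEnd ℂ) (busV v θ n) *
        ∑ i, (lam i : ℂ) * busV v θ i * (starRingEnd ℂ) (Y i n)

/-! Since `V_k = v_k e^{jθ_k}`, moving `θ_m` gives `∂V_k/∂θ_m = [k = m] j V_k`, and complex
conjugation commutes with differentiation in a real variable. The product rule applied to the two
terms of `W_n` then yields the stated entry after using `j² = -1`. -/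

open Complex Function

theorem hasDerivAt_ofReal_mul_cexp_I_mul (r x : ℝ) :
    HasDerivAt (fun t : ℝ => (r : ℂ) * exp (I * t)) (I * ((r : ℂ) * exp (I * x))) x := by
  have hArg : HasDerivAt (fun t : ℝ => I * (t : ℂ)) I x := by
    simpa using (hasDerivAt_id x).ofReal_comp.const_mul I
  exact (hArg.cexp.const_mul (r : ℂ)).congr_deriv (by ring)

section BusDerivatives

variable {nb : Type*} [DecidableEq nb] (v θ : nb → ℝ) (m : nb)

theorem hasDerivAt_busV_update (k : nb) :
    HasDerivAt (fun t => busV v (update θ m t) k)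
      (if m = k then I * busV v θ k else 0) (θ m) := by
  rcases eq_or_ne m k with rfl | hmk
  · simpa [busV] using hasDerivAt_ofReal_mul_cexp_I_mul (v m) (θ m)
  · simpa [busV, update_of_ne hmk.symm, hmk] using hasDerivAt_const (θ m) (busV v θ k)

theorem hasDerivAt_sum_mul_busV_update [Fintype nb] (c : nb → ℂ) :
    HasDerivAt (fun t => ∑ k, c k * busV v (update θ m t) k)
      (c m * (I * busV v θ m)) (θ m) := by
  simpa [mul_ite] using
    HasDerivAt.fun_sum (u := Finset.univ) fun k _ =>
      (hasDerivAt_busV_update v θ m k).const_mul (c k)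

end BusDerivatives

/-- The `(m, n)` entry of the angle–angle Hessian `G_ΘΘ(λ)`: partial derivative
of `W_n` with respect to the angle `θ_m`. -/
theorem hasDerivAt_gradThetaW_angle {nb : Type*} [Fintype nb] [DecidableEq nb]
    (Y : Matrix nb nb ℂ) (lam : nb → ℝ) (v θ : nb → ℝ) (m n : nb) :
    HasDerivAt (fun t : ℝ => gradThetaW Y lam v (Function.update θ m t) n)
      (-(if m = n then 1 else 0) * (lam m : ℂ) * busV v θ m *
          (starRingEnd ℂ) (busI Y v θ m)
        + (lam n : ℂ) * busV v θ n * (starRingEnd ℂ) (Y n m) *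
            (starRingEnd ℂ) (busV v θ m)
        + (lam m : ℂ) * busV v θ m * (starRingEnd ℂ) (Y m n) *
            (starRingEnd ℂ) (busV v θ n)
        - (if m = n then 1 else 0) * (starRingEnd ℂ) (busV v θ n) *
            ∑ i, (lam i : ℂ) * busV v θ i * (starRingEnd ℂ) (Y i n))
      (θ m) := by
  have hV := hasDerivAt_busV_update v θ m n
  have hI : HasDerivAt (fun t => busI Y v (update θ m t) n) (Y n m * (I * busV v θ m)) (θ m) :=
    hasDerivAt_sum_mul_busV_update v θ m (Y n)
  have hS : HasDerivAt
      (fun t => ∑ i, (lam i : ℂ) * busV v (update θ m t) i * (starRingEnd ℂ) (Y i n))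
      ((lam m : ℂ) * (I * busV v θ m) * (starRingEnd ℂ) (Y m n)) (θ m) := by
    simpa only [mul_right_comm _ (starRingEnd ℂ _)] using
      hasDerivAt_sum_mul_busV_update v θ m fun i => (lam i : ℂ) * (starRingEnd ℂ) (Y i n)
  have h := ((hV.const_mul (I * lam n)).fun_mul hI.star).fun_sub ((hV.star.const_mul I).fun_mul hS)
  simp only [update_eq_self] at h
  refine h.congr_deriv ?_
  rcases eq_or_ne m n with rfl | hmn <;>
    simp only [*, ↓reduceIte, star_mul', star_zero, Complex.star_def, Complex.conj_I] <;>
    ring_nf <;> simp only [I_sq] <;> ring
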